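/- Let V be a real vector space, (s_m)_{m∈ℕ} a family of linear endomorphisms of V, and define the induced operator S on sequences X : ℕ → V by (S X)_n = Σ_{m=0}^{n} s_m(X_{n−m}) (the order-by-order action of the deformed differential s = Σ_m ε^m s_m on formal series in ε). Assume: (i) S ∘ S = 0 (the deformed differential squares to zero); (ii) there is a family (g_i)_{i∈ι} of elements of V with s_m(g_i) = 0 for all m and i; (iii) for every v ∈ V with s₀(v) = 0 there exist a finitely supported family of reals (a_i) and an element y ∈ V such that v = Σ_i a_i g_i + s₀(y) (the Kluberg-Stern–Zuber property at order zero). Then for every K ∈ ℕ and every sequence X : ℕ → V with (S X)_n = 0 for all n < K, there exist finitely supported coefficient families a_n : ι →₀ ℝ and a sequence Y : ℕ → V such that X_n = Σ_i (a_n)_i g_i + (S Y)_n for all n < K. -/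

import Mathlib

/-- Order-by-order Kluberg-Stern–Zuber decomposition: if the deformed differential
S, acting on formal series by (S X)_n = Σ_{m≤n} s_m(X_{n−m}), squares to zero,
the invariants g_i are annihilated by every s_m, and every s₀-closed element
decomposes as a combination of the g_i plus an s₀-exact term, then every
sequence X with (S X)_n = 0 for n < K decomposes as
X_n = Σ_i (a_n)_i g_i + (S Y)_n for n < K. -/
theorem stmt_10 {V : Type*} [AddCommGroup V] [Module ℝ V]
    (s : ℕ → V →ₗ[ℝ] V) {ι : Type*} (g : ι → V)
    (S : (ℕ → V) → ℕ → V)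
    (hSdef : ∀ X n, S X n = ∑ m ∈ Finset.range (n + 1), s m (X (n - m)))
    (hS2 : ∀ X, S (S X) = 0)
    (hg : ∀ m i, s m (g i) = 0)
    (hKSZ : ∀ v : V, s 0 v = 0 →
      ∃ (a : ι →₀ ℝ) (y : V), v = (a.sum fun i c => c • g i) + s 0 y) :
    ∀ (K : ℕ) (X : ℕ → V), (∀ n < K, S X n = 0) →
      ∃ (a : ℕ → ι →₀ ℝ) (Y : ℕ → V),
        ∀ n < K, X n = ((a n).sum fun i c => c • g i) + S Y n := by
  intro K
  induction K with
  | zero =>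
    intro X _
    exact ⟨fun _ => 0, fun _ => 0, fun n hn => absurd hn (Nat.not_lt_zero n)⟩
  | succ K ih =>
    intro X hX
    obtain ⟨a, Y, hY⟩ := ih X (fun n hn => hX n (hn.trans (Nat.lt_succ_self K)))
    set X' : ℕ → V := fun n => X n - S Y n with hX'def
    have hX'lt : ∀ n < K, X' n = (a n).sum fun i c => c • g i := by
      intro n hn
      simp only [hX'def]
      rw [hY n hn]
      abel
    have hSX' : ∀ n < K + 1, S X' n = 0 := by
      intro n hn
      have h0 : S (S Y) n = 0 := by rw [hS2 Y]; rfl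
      have hx := hX n hn
      rw [hSdef] at h0 hx ⊢
      have hterm : ∀ m ∈ Finset.range (n + 1),
          s m (X' (n - m)) = s m (X (n - m)) - s m (S Y (n - m)) := by
        intro m _; simp [hX'def, map_sub]
      rw [Finset.sum_congr rfl hterm, Finset.sum_sub_distrib, hx, h0, sub_zero]
    have hkey : s 0 (X' K) = 0 := by
      have h := hSX' K (Nat.lt_succ_self K)
      rw [hSdef, Finset.sum_range_succ'] at h
      have hrest : ∀ i ∈ Finset.range K, s (i + 1) (X' (K - (i + 1))) = 0 := by
        intro i hi
        have hi' : K - (i + 1) < K := by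
          have := Finset.mem_range.mp hi; omega
        rw [hX'lt _ hi', Finsupp.sum, map_sum]
        simp [hg]
      rw [Finset.sum_eq_zero hrest, zero_add] at h
      simpa using h
    obtain ⟨aK, y, hy⟩ := hKSZ _ hkey
    refine ⟨fun n => if n = K then aK else a n,
      fun n => Y n + (if n = K then y else 0), ?_⟩
    intro n hn
    have hSY' : S (fun k => Y k + (if k = K then y else 0)) n
        = S Y n + (if n = K then s 0 y else 0) := by
      rw [hSdef, hSdef]
      rcases eq_or_lt_of_le (Nat.lt_succ_iff.mp hn) with hEq | hlt
      · subst hEq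
        simp only [if_pos rfl]
        rw [Finset.sum_range_succ', Finset.sum_range_succ']
        have : ∀ i ∈ Finset.range n, s (i + 1) (Y (n - (i + 1)) + (if n - (i + 1) = n then y else 0))
            = s (i + 1) (Y (n - (i + 1))) := by
          intro i hi
          have : n - (i + 1) ≠ n := by
            have := Finset.mem_range.mp hi
            omega
          rw [if_neg this, add_zero]
        rw [Finset.sum_congr rfl this]
        simp [map_add]
        abel
      · rw [if_neg (by omega)]
        rw [add_zero]
        refine Finset.sum_congr rfl (fun m hm => ?_)
        have : n - m ≠ K := by
          have := Finset.mem_range.mp hm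
          omega
        rw [if_neg this, add_zero]
    rcases eq_or_lt_of_le (Nat.lt_succ_iff.mp hn) with hEq | hlt
    · subst hEq
      rw [hSY']
      simp only [if_pos rfl, ↓reduceIte]
      have : X n = X' n + S Y n := by simp [hX'def]
      rw [this, hy]
      abel
    · have hne : n ≠ K := Nat.ne_of_lt hlt
      rw [hSY']
      simp only [if_neg hne, add_zero]
      exact hY n hlt
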